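/- arXiv:1701.03723 — 2 statements merged into one kernel-verified Lean document; each statement's English description precedes it below -/
import Mathlib

section
/- For integers k ≥ 1 and p ≥ 2, Σ_{n=1}^∞ ζ_n({1}_{p−1}) / (n(n+k)) = (1/k) · ( ζ(p) + ζ_k^⋆({1}_p) − ζ_k^⋆({1}_{p−1})/k ). -/
open Finset

/-- Multiple harmonic number `ζ_n({1}_m)`:
`ζ_n({1}_m) = ∑_{n ≥ n₁ > n₂ > ⋯ > n_m ≥ 1} 1/(n₁ ⋯ n_m)`, with `ζ_n({1}_0) = 1`. -/
noncomputable def mhn : ℕ → ℕ → ℝ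
  | _, 0 => 1
  | n, m + 1 => ∑ k ∈ Finset.Icc 1 n, mhn (k - 1) m / (k : ℝ)

/-- Multiple harmonic star number `ζ_n^⋆({1}_m)`:
`ζ_n^⋆({1}_m) = ∑_{n ≥ n₁ ≥ n₂ ≥ ⋯ ≥ n_m ≥ 1} 1/(n₁ ⋯ n_m)`, with `ζ_n^⋆({1}_0) = 1`. -/
noncomputable def mhsn : ℕ → ℕ → ℝ
  | _, 0 => 1
  | n, m + 1 => ∑ k ∈ Finset.Icc 1 n, mhsn k m / (k : ℝ)

/-- Multiple harmonic number with repeated real argument `p`: `ζ_n({p}_m)`. -/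
noncomputable def mhnP (p : ℝ) : ℕ → ℕ → ℝ
  | _, 0 => 1
  | n, m + 1 => ∑ k ∈ Finset.Icc 1 n, mhnP p (k - 1) m / (k : ℝ) ^ p

/-- Multiple harmonic star number with repeated real argument `p`: `ζ_n^⋆({p}_m)`. -/
noncomputable def mhsnP (p : ℝ) : ℕ → ℕ → ℝ
  | _, 0 => 1
  | n, m + 1 => ∑ k ∈ Finset.Icc 1 n, mhsnP p k m / (k : ℝ) ^ p

/-- Generalized harmonic number `H_n^{(p)} = ∑_{j=1}^n 1/j^p`. -/
noncomputable def genH (p n : ℕ) : ℝ := ∑ j ∈ Finset.Icc 1 n, 1 / (j : ℝ) ^ p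

/-- Auxiliary: `hypAux m n k = h_n^{(m+1)}(k)` for `k ≥ 1` (peel off the weak outer indices). -/
noncomputable def hypAux : ℕ → ℕ → ℕ → ℝ
  | 0, n, k => mhn n k
  | m + 1, n, k => ∑ j ∈ Finset.Icc 1 n, hypAux m j k

/-- Generalized hyperharmonic number `h_n^{(m)}(k)`, with the convention
`h_n^{(m)}(0) = C(m+n-1, m-1)`. -/
noncomputable def gh (n m k : ℕ) : ℝ :=
  if k = 0 then (Nat.choose (m + n - 1) (m - 1) : ℝ) else hypAux (m - 1) n k

/-- Unsigned Stirling number of the first kind, defined by the standard recurrence,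
equivalently by `x(x+1)⋯(x+n-1) = ∑_{k=0}^n [n; k] xᵏ`. -/
def stir1 : ℕ → ℕ → ℕ
  | 0, 0 => 1
  | 0, _ + 1 => 0
  | _ + 1, 0 => 0
  | n + 1, k + 1 => stir1 n k + n * stir1 n (k + 1)

/-- Multiple zeta value `ζ(p, {1}_m)`. -/
noncomputable def mzv (p m : ℕ) : ℝ := ∑' n : ℕ, mhn n m / (n + 1 : ℝ) ^ p

/-- Multiple zeta star value `ζ^⋆(p, {1}_m)`. -/
noncomputable def mzvStar (p m : ℕ) : ℝ := ∑' n : ℕ, mhsn (n + 1) m / (n + 1 : ℝ) ^ p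

/-- Riemann zeta value `ζ(p) = ∑_{n=1}^∞ 1/n^p`. -/
noncomputable def rz (p : ℕ) : ℝ := ∑' n : ℕ, 1 / (n + 1 : ℝ) ^ p

/-- `U_{m,r}(p) = ∑_{n=1}^∞ ζ_{n+r}({1}_m)/n^p`. -/
noncomputable def Usum (m r p : ℕ) : ℝ := ∑' n : ℕ, mhn (n + 1 + r) m / (n + 1 : ℝ) ^ p

/-- Strictly decreasing `q`-fold sum `Ā_q(n) = ∑_{1 ≤ k_q < ⋯ < k₁ ≤ n} a_{k₁}⋯a_{k_q}`,
with `Ā_0(n) = 1` (so `Ā_q(n) = 0` when `n < q`). -/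
def sdSum {R : Type*} [Semiring R] (a : ℕ → R) : ℕ → ℕ → R
  | _, 0 => 1
  | n, q + 1 => ∑ k ∈ Finset.Icc 1 n, a k * sdSum a (k - 1) q

/-- Weakly decreasing `q`-fold sum `A_q(n) = ∑_{1 ≤ k_q ≤ ⋯ ≤ k₁ ≤ n} a_{k₁}⋯a_{k_q}`,
with `A_0(n) = 1`. -/
def wdSum {R : Type*} [Semiring R] (a : ℕ → R) : ℕ → ℕ → R
  | _, 0 => 1
  | n, q + 1 => ∑ k ∈ Finset.Icc 1 n, a k * wdSum a k q

/-!
Since `ζ_n({1}_{p-1}) = ζ_{n-1}({1}_{p-1}) + ζ_{n-1}({1}_{p-2})/n` and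
`1/(n²(n+k)) = (1/n² - 1/(n(n+k)))/k`, the series splits into Euler's `ζ(2,{1}_{p-2}) = ζ(p)` and
two instances of `∑_{n≥1} ζ_{n-1}({1}_m)/(n(n+k)) = ζ_k^⋆({1}_{m+1})/k`.

The latter follows by induction on `m`: expanding the outermost index `r` of
`ζ_{n-1}({1}_{m+1})` and summing over `n` first leaves `∑_{n>r} 1/(n(n+k)) = (1/k) ∑_{i=1}^k 1/(r+i)`,
which produces the star sum. Euler's identity is the connected-sum argument of Seki and Yamamoto:
with `c(a,b) = a! b!/(a+b)!`, the transport relation `∑_{b>n} c(a,b)/b = c(a,n)/a` gives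
`∑_{b≥1} ζ_{b-1}({1}_m) c(a,b)/b = a^{-m-1}` for every `a ≥ 1` by induction on `m`. Hence the
nonnegative double series `∑_{a,b≥1} ζ_{b-1}({1}_m) c(a,b)/(ab)` is `ζ(m+2)` when summed over `b`
first, and `ζ(2,{1}_m)` when summed over `a` first, because `∑_{a≥1} c(a,b)/a = 1/b`.
-/

open Filter Topology

lemma hasSum_comm_of_nonneg {β γ : Type*} {f : β → γ → ℝ} (hf : ∀ b c, 0 ≤ f b c)
    {F : β → ℝ} {G : γ → ℝ} {s : ℝ} (hF : ∀ b, HasSum (f b) (F b))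
    (hG : ∀ c, HasSum (fun b => f b c) (G c)) (hs : HasSum F s) : HasSum G s := by
  have hsum : Summable fun x : β × γ => f x.1 x.2 :=
    (summable_prod_of_nonneg fun x => hf x.1 x.2).2
      ⟨fun b => (hF b).summable, by simpa only [(hF _).tsum_eq] using hs.summable⟩
  have hprod : HasSum (fun x : β × γ => f x.1 x.2) s :=
    (hsum.hasSum.prod_fiberwise hF).unique hs ▸ hsum.hasSum
  exact ((Equiv.prodComm γ β).hasSum_iff.2 hprod).prod_fiberwise hG

lemma hasSum_sub_succ_of_antitone {f : ℕ → ℝ} (hf : Antitone f) {l : ℝ}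
    (hl : Tendsto f atTop (𝓝 l)) : HasSum (fun n => f n - f (n + 1)) (f 0 - l) := by
  rw [hasSum_iff_tendsto_nat_of_nonneg (fun n => sub_nonneg.2 (hf n.le_succ))]
  simpa only [sum_range_sub'] using tendsto_const_nhds.sub hl

lemma hasSum_one_div_mul_add_nat {x : ℝ} (hx : 0 < x) {k : ℕ} (hk : 0 < k) :
    HasSum (fun j : ℕ => 1 / ((j + x) * (j + x + k))) ((∑ i ∈ range k, 1 / (i + x)) / k) := by
  have hk' : (0 : ℝ) < k := by exact_mod_cast hk
  set g : ℕ → ℝ := fun j => (∑ i ∈ range k, 1 / (j + i + x)) / k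
  have hg : Antitone g := by
    refine antitone_nat_of_succ_le fun j => div_le_div_of_nonneg_right
      (sum_le_sum fun i _ => one_div_le_one_div_of_le (by positivity) ?_) hk'.le
    push_cast; linarith
  have hg0 : Tendsto g atTop (𝓝 0) := by
    have h := (tendsto_finsetSum (range k) fun i _ =>
      (tendsto_natCast_atTop_atTop.atTop_add (tendsto_const_nhds (x := (i : ℝ) + x))
        ).inv_tendsto_atTop).div_const (k : ℝ)
    simpa [g, add_assoc] using h
  have hsub : ∀ j : ℕ, g j - g (j + 1) = 1 / ((j + x) * (j + x + k)) := by
    intro j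
    have htel := sum_range_succ (fun i : ℕ => 1 / ((j : ℝ) + i + x)) k
    rw [sum_range_succ', Nat.cast_zero, add_zero] at htel
    have hshift : ∑ i ∈ range k, 1 / (((j + 1 : ℕ) : ℝ) + i + x)
        = ∑ i ∈ range k, 1 / ((j : ℝ) + (i + 1 : ℕ) + x) :=
      sum_congr rfl fun i _ => by push_cast; ring_nf
    simp only [g, hshift, ← sub_div]
    have hjx : (j : ℝ) + x ≠ 0 := by positivity
    have hjxk : (j : ℝ) + x + k ≠ 0 := by positivity
    calc _ = (1 / (j + x) - 1 / (j + x + k)) / k := by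
          congr 1
          rw [show (j : ℝ) + x + k = j + k + x by ring]
          linarith
      _ = _ := by field_simp; ring
  convert hasSum_sub_succ_of_antitone hg hg0 using 1
  · exact funext fun j => (hsub j).symm
  · simp [g]

lemma hasSum_rz {p : ℕ} (hp : 1 < p) : HasSum (fun n : ℕ => 1 / ((n : ℝ) + 1) ^ p) (rz p) := by
  refine Summable.hasSum ?_
  simpa using (summable_nat_add_iff 1).2 (Real.summable_one_div_nat_pow.2 hp)

/-- The Seki–Yamamoto connector `c(a, b) = a! b! / (a + b)!`. -/
noncomputable def connector (a b : ℕ) : ℝ := ((a + b).choose a : ℝ)⁻¹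

lemma connector_comm (a b : ℕ) : connector a b = connector b a := by
  rw [connector, connector, Nat.choose_symm_add, add_comm]

@[simp]
lemma connector_zero_right (a : ℕ) : connector a 0 = 1 := by
  simp [connector]

lemma connector_nonneg (a b : ℕ) : 0 ≤ connector a b := by
  unfold connector; positivity

lemma connector_le_one_div (a n : ℕ) (ha : 0 < a) : connector a n ≤ 1 / (n + 1) := by
  have h : n + 1 ≤ (a + n).choose a := by
    rw [Nat.choose_symm_add, ← Nat.choose_succ_self_right]
    exact Nat.choose_le_choose n (by omega)
  rw [connector, ← one_div]
  exact one_div_le_one_div_of_le (by positivity) (by exact_mod_cast h)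

lemma connector_div_sub_connector_succ_div (a n : ℕ) (ha : 0 < a) :
    connector a n / a - connector a (n + 1) / a = connector a (n + 1) / (n + 1) := by
  have hpascal : ((a + (n + 1)).choose a : ℝ) * (n + 1) = (a + n + 1) * (a + n).choose a := by
    rw [Nat.choose_symm_add, Nat.choose_symm_add]
    exact_mod_cast (Nat.add_one_mul_choose_eq (a + n) n).symm
  have : ((a + n).choose a : ℝ) ≠ 0 := Nat.cast_ne_zero.2 (Nat.choose_pos (by omega)).ne'
  have : ((a + (n + 1)).choose a : ℝ) ≠ 0 := Nat.cast_ne_zero.2 (Nat.choose_pos (by omega)).ne'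
  have : (a : ℝ) ≠ 0 := by positivity
  unfold connector
  field_simp
  linear_combination hpascal

lemma hasSum_connector_div (a n : ℕ) (ha : 0 < a) :
    HasSum (fun j : ℕ => connector a (j + (n + 1)) / (j + (n + 1) : ℕ)) (connector a n / a) := by
  set f : ℕ → ℝ := fun j => connector a (j + n) / a
  have hstep : ∀ j, f j - f (j + 1) = connector a (j + (n + 1)) / (j + (n + 1) : ℕ) := by
    intro j
    simp only [f, connector_div_sub_connector_succ_div a (j + n) ha, Nat.add_right_comm j 1 n]
    push_cast; ring_nf
  have hf : Antitone f := antitone_nat_of_succ_le fun j => sub_nonneg.1 <| by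
    rw [hstep]; exact div_nonneg (connector_nonneg _ _) (Nat.cast_nonneg _)
  have hf0 : Tendsto f atTop (𝓝 0) := by
    refine squeeze_zero (fun j => div_nonneg (connector_nonneg _ _) (Nat.cast_nonneg _))
      (fun j => ?_) tendsto_one_div_add_atTop_nhds_zero_nat
    calc f j ≤ connector a (j + n) := div_le_self (connector_nonneg _ _) (by exact_mod_cast ha)
      _ ≤ 1 / ((j + n : ℕ) + 1) := connector_le_one_div a _ ha
      _ ≤ 1 / (j + 1) := one_div_le_one_div_of_le (by positivity) (by push_cast; linarith)
  convert hasSum_sub_succ_of_antitone hf hf0 using 1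
  · exact funext fun j => (hstep j).symm
  · simp [f]

lemma mhn_succ_eq_sum_range (n m : ℕ) :
    mhn n (m + 1) = ∑ r ∈ range n, mhn r m / (r + 1) := by
  rw [mhn, ← Ico_add_one_right_eq_Icc, sum_Ico_eq_sum_range]
  simp [add_comm]

lemma mhsn_succ_eq_sum_range (n m : ℕ) :
    mhsn n (m + 1) = ∑ r ∈ range n, mhsn (r + 1) m / (r + 1) := by
  rw [mhsn, ← Ico_add_one_right_eq_Icc, sum_Ico_eq_sum_range]
  simp [add_comm]

lemma mhn_succ_succ (n m : ℕ) : mhn (n + 1) (m + 1) = mhn n (m + 1) + mhn n m / (n + 1) := by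
  rw [mhn_succ_eq_sum_range, sum_range_succ, ← mhn_succ_eq_sum_range]

lemma mhn_nonneg (n m : ℕ) : 0 ≤ mhn n m := by
  induction m generalizing n with
  | zero => simp [mhn]
  | succ m ih =>
    rw [mhn_succ_eq_sum_range]
    exact sum_nonneg fun r _ => div_nonneg (ih r) (by positivity)

lemma hasSum_mhn_succ_mul (m : ℕ) {w W : ℕ → ℝ} (hw : ∀ b, 0 ≤ w b)
    (hW : ∀ r, HasSum (fun j => w (j + (r + 1))) (W r)) {s : ℝ}
    (hs : HasSum (fun r => mhn r m / (r + 1) * W r) s) :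
    HasSum (fun b => mhn b (m + 1) * w b) s := by
  set f : ℕ → ℕ → ℝ := fun r b => if r < b then mhn r m / (r + 1) * w b else 0
  refine hasSum_comm_of_nonneg (f := f) (fun r b => ?_) (fun r => ?_) (fun b => ?_) hs
  · simp only [f]
    split_ifs
    · exact mul_nonneg (div_nonneg (mhn_nonneg r m) (by positivity)) (hw b)
    · exact le_rfl
  · rw [← hasSum_nat_add_iff' (r + 1), sum_eq_zero fun b hb => if_neg (by simp at hb; omega),
      sub_zero]
    exact ((hW r).mul_left (mhn r m / (r + 1))).congr_fun fun j => if_pos (by omega)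
  · have h : HasSum (fun r => f r b) (∑ r ∈ range b, f r b) :=
      hasSum_sum_of_ne_finset_zero fun r hr => if_neg (by simpa using hr)
    rwa [sum_congr rfl fun r hr => if_pos (mem_range.1 hr), ← sum_mul,
      ← mhn_succ_eq_sum_range] at h

lemma hasSum_mhn_mul_connector (m : ℕ) {a : ℕ} (ha : 0 < a) :
    HasSum (fun b => mhn b m * (connector a (b + 1) / (b + 1))) (1 / a ^ (m + 1)) := by
  induction m with
  | zero =>
    simpa [mhn] using hasSum_connector_div a 0 ha
  | succ m ih =>
    refine hasSum_mhn_succ_mul m (W := fun r => connector a (r + 1) / a)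
      (fun b => div_nonneg (connector_nonneg _ _) (by positivity)) (fun r => ?_) ?_
    · exact (hasSum_connector_div a (r + 1) ha).congr_fun fun j => by push_cast; ring_nf
    · rw [pow_succ, ← div_div]
      refine (ih.div_const (a : ℝ)).congr_fun fun r => ?_
      ring

lemma hasSum_mhn_div_mul_add (m : ℕ) {k : ℕ} (hk : 0 < k) :
    HasSum (fun n => mhn n m / ((n + 1) * (n + 1 + k))) (mhsn k (m + 1) / k) := by
  induction m generalizing k with
  | zero =>
    rw [mhsn_succ_eq_sum_range]
    simpa [mhn, mhsn] using hasSum_one_div_mul_add_nat one_pos hk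
  | succ m ih =>
    rw [mhsn_succ_eq_sum_range, sum_div]
    refine (hasSum_mhn_succ_mul m (w := fun n => 1 / ((n + 1) * (n + 1 + k)))
      (W := fun r => (∑ i ∈ range k, 1 / ((i : ℝ) + (r + 2))) / k) (fun b => by positivity)
      (fun r => ?_) ?_).congr_fun fun n => (mul_one_div _ _).symm
    · refine (hasSum_one_div_mul_add_nat (x := r + 2) (by positivity) hk).congr_fun fun j => ?_
      push_cast
      ring_nf
    · have h := hasSum_sum fun i (_ : i ∈ range k) => (ih (k := i + 1) i.succ_pos).div_const (k : ℝ)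
      push_cast at h
      refine h.congr_fun fun r => ?_
      rw [← sum_div, mul_div_assoc', mul_sum]
      congr 1
      refine sum_congr rfl fun i _ => ?_
      field_simp
      ring

theorem hasSum_mhn_div_sq (q : ℕ) : HasSum (fun n => mhn n q / (n + 1) ^ 2) (rz (q + 2)) := by
  refine hasSum_comm_of_nonneg
    (f := fun a b => mhn b q * (connector (a + 1) (b + 1) / (b + 1)) / (a + 1))
    (fun a b => by have := mhn_nonneg b q; have := connector_nonneg (a + 1) (b + 1); positivity)
    (fun a => (hasSum_mhn_mul_connector q a.succ_pos).div_const _) (fun b => ?_) ?_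
  · have h := (hasSum_connector_div (b + 1) 0 b.succ_pos).mul_left (mhn b q / (b + 1))
    rw [connector_zero_right, show mhn b q / (b + 1) * (1 / ((b + 1 : ℕ) : ℝ))
      = mhn b q / (b + 1) ^ 2 by push_cast; field_simp] at h
    refine h.congr_fun fun a => ?_
    rw [connector_comm]
    push_cast
    ring
  · refine (hasSum_rz (by omega)).congr_fun fun a => ?_
    rw [Nat.cast_succ, div_div, ← pow_succ]

/-- formula (4.6): for `k ≥ 1`, `p ≥ 2`,
`∑_{n=1}^∞ ζ_n({1}_{p-1})/(n(n+k)) = (1/k)(ζ(p) + ζ_k^⋆({1}_p) - ζ_k^⋆({1}_{p-1})/k)`. -/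
theorem mhn_series_identity (k p : ℕ) (hk : 1 ≤ k) (hp : 2 ≤ p) :
    ∑' n : ℕ, mhn (n + 1) (p - 1) / ((n + 1 : ℝ) * ((n + 1 : ℝ) + k)) =
      (1 / (k : ℝ)) * (rz p + mhsn k p - mhsn k (p - 1) / (k : ℝ)) := by
  obtain ⟨q, rfl⟩ : ∃ q, p = q + 2 := ⟨p - 2, by omega⟩
  have hk' : (k : ℝ) ≠ 0 := by positivity
  have h := (hasSum_mhn_div_mul_add (q + 1) hk).add
    (((hasSum_mhn_div_sq q).sub (hasSum_mhn_div_mul_add q hk)).div_const k)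
  have hterm : ∀ n : ℕ, mhn (n + 1) (q + 1) / ((n + 1 : ℝ) * ((n + 1 : ℝ) + k)) =
      mhn n (q + 1) / ((n + 1) * (n + 1 + k)) +
        (mhn n q / (n + 1) ^ 2 - mhn n q / ((n + 1) * (n + 1 + k))) / k := by
    intro n
    rw [mhn_succ_succ]
    field_simp
    ring
  rw [show q + 2 - 1 = q + 1 from rfl, tsum_congr hterm, h.tsum_eq]
  field_simp
  ring
end

section
/- For integers r ≥ 0, m ≥ 1 and n ≥ 1, Σ_{1 ≤ k_m < ⋯ < k_1 ≤ n} 1/((k_1 + r)(k_2 + r)⋯(k_m + r)) = Σ_{i+j=m, i,j ≥ 0} (−1)^i · ζ_r^⋆({1}_i) · ζ_{n+r}({1}_j). -/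
open Finset

/-! The generating series `∑_q Ā_q(n) X^q` of the strict sums is `∏_{k=1}^n (1 + a_k X)`, and
the alternating series `∑_q (-1)^q A_q(n) X^q` of the weak sums is its inverse. Splitting the
product for `n + r` into the factors `k ≤ r` and `k > r` and multiplying by the inverse of the
first block leaves the generating series of the shifted strict sums; with `a_k = 1/k` the
coefficient of `X^m` is the identity. -/

open PowerSeries

section StrictWeakDuality

variable {R : Type*} [CommRing R] (a : ℕ → R)

theorem sdSum_succ_succ (n q : ℕ) :
    sdSum a (n + 1) (q + 1) = sdSum a n (q + 1) + a (n + 1) * sdSum a n q := by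
  simp only [sdSum]
  rw [sum_Icc_succ_top (by omega), Nat.add_sub_cancel]

theorem wdSum_succ_succ (n q : ℕ) :
    wdSum a (n + 1) (q + 1) = wdSum a n (q + 1) + a (n + 1) * wdSum a (n + 1) q := by
  simp only [wdSum]
  rw [sum_Icc_succ_top (by omega)]

noncomputable def sdSeries (n : ℕ) : PowerSeries R := mk (sdSum a n)

noncomputable def altWdSeries (n : ℕ) : PowerSeries R := mk fun q => (-1) ^ q * wdSum a n q

theorem sdSeries_succ (n : ℕ) :
    sdSeries a (n + 1) = (1 + C (a (n + 1)) * X) * sdSeries a n := by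
  ext (_ | q)
  · simp [sdSeries, sdSum]
  · simp [sdSeries, add_mul, mul_assoc, coeff_succ_X_mul, sdSum_succ_succ]

theorem sdSeries_eq_prod (n : ℕ) :
    sdSeries a n = ∏ k ∈ range n, (1 + C (a (k + 1)) * X) := by
  induction n with
  | zero => ext (_ | q) <;> simp [sdSeries, sdSum]
  | succ n ih => rw [sdSeries_succ, ih, prod_range_succ, mul_comm]

theorem sdSeries_add (n r : ℕ) :
    sdSeries a (n + r) = sdSeries (fun k => a (k + r)) n * sdSeries a r := by
  simp only [sdSeries_eq_prod, add_comm n r, prod_range_add, mul_comm (∏ k ∈ range r, _)]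
  congr! 6
  omega

theorem altWdSeries_succ_mul (n : ℕ) :
    altWdSeries a (n + 1) * (1 + C (a (n + 1)) * X) = altWdSeries a n := by
  rw [mul_comm]
  ext (_ | q)
  · simp [altWdSeries, wdSum]
  · rw [add_mul, one_mul, mul_assoc, map_add, coeff_C_mul, coeff_succ_X_mul]
    simp only [altWdSeries, coeff_mk, wdSum_succ_succ]
    ring

theorem altWdSeries_mul_sdSeries (n : ℕ) : altWdSeries a n * sdSeries a n = 1 := by
  induction n with
  | zero =>
    rw [sdSeries_eq_prod, prod_range_zero, mul_one]
    ext (_ | q) <;> simp [altWdSeries, wdSum]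
  | succ n ih => rw [sdSeries_succ, ← mul_assoc, altWdSeries_succ_mul, ih]

theorem sdSum_shift_eq (n r q : ℕ) :
    sdSum (fun k => a (k + r)) n q =
      ∑ i ∈ range (q + 1), (-1) ^ i * wdSum a r i * sdSum a (n + r) (q - i) := by
  have h : sdSeries (fun k => a (k + r)) n = altWdSeries a r * sdSeries a (n + r) := by
    rw [sdSeries_add, mul_left_comm, altWdSeries_mul_sdSeries, mul_one]
  simpa [altWdSeries, sdSeries, coeff_mul, Nat.sum_antidiagonal_eq_sum_range_succ
    (fun i j => (-1) ^ i * wdSum a r i * sdSum a (n + r) j)] using congr_arg (coeff q) h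

end StrictWeakDuality

theorem mhn_eq_sdSum (n m : ℕ) : mhn n m = sdSum (fun k => 1 / (k : ℝ)) n m := by
  induction m generalizing n with
  | zero => rfl
  | succ m ih => simp only [mhn, sdSum, ih]; congr! 1 with k; ring

theorem mhsn_eq_wdSum (n m : ℕ) : mhsn n m = wdSum (fun k => 1 / (k : ℝ)) n m := by
  induction m generalizing n with
  | zero => rfl
  | succ m ih => simp only [mhsn, wdSum, ih]; congr! 1 with k; ring

theorem shifted_mhn_eq_general (r m n : ℕ) :
    sdSum (fun k => 1 / ((k : ℝ) + r)) n m =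
      ∑ i ∈ Finset.range (m + 1), (-1 : ℝ) ^ i * mhsn r i * mhn (n + r) (m - i) := by
  simpa [mhn_eq_sdSum, mhsn_eq_wdSum] using sdSum_shift_eq (fun k => 1 / (k : ℝ)) n r m

/-- Theorem 2.6: for `r ≥ 0`, `m, n ≥ 1`,
`∑_{1 ≤ k_m < ⋯ < k₁ ≤ n} 1/((k₁+r)⋯(k_m+r)) = ∑_{i+j=m} (-1)^i ζ_r^⋆({1}_i) ζ_{n+r}({1}_j)`. -/
theorem shifted_mhn_eq (r m n : ℕ) (hm : 1 ≤ m) (hn : 1 ≤ n) :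
    sdSum (fun k => 1 / ((k : ℝ) + r)) n m =
      ∑ i ∈ Finset.range (m + 1), (-1 : ℝ) ^ i * mhsn r i * mhn (n + r) (m - i) :=
  shifted_mhn_eq_general r m n
end
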